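/- Let λ ∈ Σ⁺ be a positive restricted root with dim 𝔤_λ > 1. Then every ℝ-linear map α : 𝔫 → ℂ satisfying α([Z, W]) = 0 for all Z ∈ 𝔪 and W ∈ 𝔫 vanishes identically on the root space 𝔤_λ. Equivalently, every element of 𝔤_λ is of the form [Z, X] with Z ∈ 𝔪 and X ∈ 𝔤_λ. -/

import Mathlib

/-- The restricted root space `𝔤_λ = {X ∈ 𝔤 : [H, X] = λ(H) • X for all H ∈ 𝔞}`. -/
def rootSpace' {𝔤 : Type} [LieRing 𝔤] [LieAlgebra ℝ 𝔤]
    (𝔞 : LieSubalgebra ℝ 𝔤) (lam : Module.Dual ℝ 𝔞) : Submodule ℝ 𝔤 where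
  carrier := {X | ∀ H : 𝔞, ⁅(H : 𝔤), X⁆ = lam H • X}
  add_mem' := fun {a b} ha hb H => by rw [lie_add, ha H, hb H, smul_add]
  zero_mem' := fun H => by simp
  smul_mem' := fun t X hX H => by rw [lie_smul, hX H, smul_comm]

/-- The subspace `𝔪 = {Z ∈ 𝔨 : [H, Z] = 0 for all H ∈ 𝔞}`, where `𝔨` is the fixed-point
set of the Cartan involution `σ`. -/
def mSub {𝔤 : Type} [LieRing 𝔤] [LieAlgebra ℝ 𝔤]
    (σ : 𝔤 →ₗ⁅ℝ⁆ 𝔤) (𝔞 : LieSubalgebra ℝ 𝔤) : Submodule ℝ 𝔤 where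
  carrier := {Z | σ Z = Z ∧ ∀ H : 𝔞, ⁅(H : 𝔤), Z⁆ = 0}
  add_mem' := fun {a b} ha hb =>
    ⟨by rw [map_add, ha.1, hb.1], fun H => by rw [lie_add, ha.2 H, hb.2 H, add_zero]⟩
  zero_mem' := ⟨σ.map_zero, fun H => lie_zero _⟩
  smul_mem' := fun t X hX =>
    ⟨by rw [map_smul, hX.1], fun H => by rw [lie_smul, hX.2 H, smul_zero]⟩

/-- The set of positive restricted roots, with respect to a basis `φ` of `𝔞*` and the map
`λ ↦ H_λ` determined by the Killing form. -/
def posRootSet {𝔤 : Type} [LieRing 𝔤] [LieAlgebra ℝ 𝔤] {r : ℕ}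
    (𝔞 : LieSubalgebra ℝ 𝔤) (φ : Module.Basis (Fin r) ℝ (Module.Dual ℝ 𝔞))
    (Hv : Module.Dual ℝ 𝔞 → 𝔞) : Set (Module.Dual ℝ 𝔞) :=
  {lam | lam ≠ 0 ∧ rootSpace' 𝔞 lam ≠ ⊥ ∧
    ∃ k : Fin r, 0 < φ k (Hv lam) ∧ ∀ j : Fin r, j < k → φ j (Hv lam) = 0}

/-- The subspace `𝔫 = ⊕_{λ ∈ Σ⁺} 𝔤_λ`. -/
def nSub {𝔤 : Type} [LieRing 𝔤] [LieAlgebra ℝ 𝔤] {r : ℕ}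
    (𝔞 : LieSubalgebra ℝ 𝔤) (φ : Module.Basis (Fin r) ℝ (Module.Dual ℝ 𝔞))
    (Hv : Module.Dual ℝ 𝔞 → 𝔞) : Submodule ℝ 𝔤 :=
  ⨆ lam ∈ posRootSet 𝔞 φ Hv, rootSpace' 𝔞 lam

/-!
Fix `X ∈ 𝔤_λ` and, as `dim 𝔤_λ > 1`, a nonzero `Y ∈ 𝔤_λ` orthogonal to `X` for the inner product
`β_σ(U, V) = -β(U, σ V)`. For `U, V ∈ 𝔤_λ` the element `[U, σ V] - [σ U, V]` lies in `𝔭` and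
centralises `𝔞`, so by maximality of `𝔞` it equals `2 β(U, σ V) H_λ`. Hence if `V ∈ 𝔤_λ` is
orthogonal to `Y` and to `[𝔪, Y]`, then `Q = [Y, σ V]` is `σ`-fixed, so lies in `𝔪`, and is
orthogonal to itself, so `Q = 0`; the Jacobi identity then gives
`β_σ([Y, V], [Y, V]) = -β_σ(Y, Y) λ(H_λ) β_σ(V, V)`, forcing `V = 0`. Thus `𝔤_λ = [𝔪, Y] + ℝ Y`,
and since both `[𝔪, Y]` and `X` are orthogonal to `Y`, `X ∈ [𝔪, Y]`. The statement about `α`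
follows because `𝔤_λ ⊆ 𝔫`.
-/

section RootSpaces

variable {𝔤 : Type} [LieRing 𝔤] [LieAlgebra ℝ 𝔤] {𝔞 : LieSubalgebra ℝ 𝔤}

lemma mem_rootSpace' {lam : Module.Dual ℝ 𝔞} {X : 𝔤} :
    X ∈ rootSpace' 𝔞 lam ↔ ∀ H : 𝔞, ⁅(H : 𝔤), X⁆ = lam H • X := Iff.rfl

lemma mem_rootSpace'_zero {X : 𝔤} : X ∈ rootSpace' 𝔞 0 ↔ ∀ H : 𝔞, ⁅(H : 𝔤), X⁆ = 0 := by
  simp only [mem_rootSpace', LinearMap.zero_apply, zero_smul]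

lemma lie_mem_rootSpace' {lam mu : Module.Dual ℝ 𝔞} {X Y : 𝔤}
    (hX : X ∈ rootSpace' 𝔞 lam) (hY : Y ∈ rootSpace' 𝔞 mu) :
    ⁅X, Y⁆ ∈ rootSpace' 𝔞 (lam + mu) := fun H => by
  rw [leibniz_lie, hX H, hY H, smul_lie, lie_smul, LinearMap.add_apply, add_smul, add_comm]

lemma mSub_le_rootSpace'_zero (σ : 𝔤 →ₗ⁅ℝ⁆ 𝔤) : mSub σ 𝔞 ≤ rootSpace' 𝔞 0 :=
  fun _ hZ => mem_rootSpace'_zero.2 hZ.2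

lemma map_mem_rootSpace'_neg {σ : 𝔤 →ₗ⁅ℝ⁆ 𝔤} (h𝔞p : ∀ X ∈ 𝔞, σ X = -X)
    {lam : Module.Dual ℝ 𝔞} {X : 𝔤} (hX : X ∈ rootSpace' 𝔞 lam) :
    σ X ∈ rootSpace' 𝔞 (-lam) := fun H => by
  rw [← neg_neg (H : 𝔤), ← h𝔞p _ H.2, neg_lie, ← LieHom.map_lie, hX H, map_smul,
    LinearMap.neg_apply, neg_smul]

lemma mem_of_mem_rootSpace'_zero {σ : 𝔤 →ₗ⁅ℝ⁆ 𝔤}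
    (h𝔞ab : ∀ X Y : 𝔤, X ∈ 𝔞 → Y ∈ 𝔞 → ⁅X, Y⁆ = 0) (h𝔞p : ∀ X ∈ 𝔞, σ X = -X)
    (h𝔞max : ∀ 𝔟 : LieSubalgebra ℝ 𝔤, (∀ X Y : 𝔤, X ∈ 𝔟 → Y ∈ 𝔟 → ⁅X, Y⁆ = 0) →
      (∀ X ∈ 𝔟, σ X = -X) → 𝔞 ≤ 𝔟 → 𝔟 = 𝔞)
    {W : 𝔤} (hW : W ∈ rootSpace' 𝔞 0) (hWp : σ W = -W) : W ∈ 𝔞 := by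
  set S : Submodule ℝ 𝔤 := 𝔞.toSubmodule ⊔ ℝ ∙ W
  have hS : ∀ x ∈ S, ∃ a ∈ 𝔞, ∃ t : ℝ, x = a + t • W := by
    intro x hx
    obtain ⟨a, ha, _, ht, rfl⟩ := Submodule.mem_sup.1 hx
    obtain ⟨t, rfl⟩ := Submodule.mem_span_singleton.1 ht
    exact ⟨a, ha, t, rfl⟩
  have hSab : ∀ x y : 𝔤, x ∈ S → y ∈ S → ⁅x, y⁆ = 0 := by
    intro x y hx hy
    obtain ⟨a, ha, t, rfl⟩ := hS x hx
    obtain ⟨b, hb, u, rfl⟩ := hS y hy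
    have haW := mem_rootSpace'_zero.1 hW ⟨a, ha⟩
    have hbW := mem_rootSpace'_zero.1 hW ⟨b, hb⟩
    simp [h𝔞ab a b ha hb, haW, ← lie_skew W b, hbW]
  let 𝔟 : LieSubalgebra ℝ 𝔤 :=
    { toSubmodule := S
      lie_mem' := fun {x y} hx hy => by rw [hSab x y hx hy]; exact S.zero_mem }
  have h𝔟p : ∀ x ∈ 𝔟, σ x = -x := by
    intro x hx
    obtain ⟨a, ha, t, rfl⟩ := hS x hx
    rw [map_add, map_smul, hWp, h𝔞p a ha, smul_neg, neg_add]
  rw [← h𝔞max 𝔟 hSab h𝔟p fun x hx => Submodule.mem_sup_left hx]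
  exact Submodule.mem_sup_right (Submodule.mem_span_singleton_self W)

end RootSpaces

structure IsCartanInvolution {𝔤 : Type} [LieRing 𝔤] [LieAlgebra ℝ 𝔤] (σ : 𝔤 →ₗ⁅ℝ⁆ 𝔤) :
    Prop where
  involutive : ∀ X, σ (σ X) = X
  neg_killingForm_pos : ∀ X : 𝔤, X ≠ 0 → 0 < -(killingForm ℝ 𝔤 X (σ X))

namespace IsCartanInvolution

variable {𝔤 : Type} [LieRing 𝔤] [LieAlgebra ℝ 𝔤] {σ : 𝔤 →ₗ⁅ℝ⁆ 𝔤}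

lemma killingForm_map_map (hσ : IsCartanInvolution σ) (x y : 𝔤) :
    killingForm ℝ 𝔤 (σ x) (σ y) = killingForm ℝ 𝔤 x y :=
  LieAlgebra.killingForm_of_equiv_apply
    { σ with invFun := σ, left_inv := hσ.involutive, right_inv := hσ.involutive } x y

lemma killingForm_map_left (hσ : IsCartanInvolution σ) (x y : 𝔤) :
    killingForm ℝ 𝔤 (σ x) y = killingForm ℝ 𝔤 x (σ y) := by
  rw [← hσ.killingForm_map_map x (σ y), hσ.involutive]

lemma killingForm_self_map_nonpos (hσ : IsCartanInvolution σ) (x : 𝔤) :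
    killingForm ℝ 𝔤 x (σ x) ≤ 0 := by
  rcases eq_or_ne x 0 with rfl | hx
  · simp
  · linarith [hσ.neg_killingForm_pos x hx]

lemma eq_zero_of_killingForm_self_map (hσ : IsCartanInvolution σ) {x : 𝔤}
    (h : killingForm ℝ 𝔤 x (σ x) = 0) : x = 0 := by
  by_contra hx
  linarith [hσ.neg_killingForm_pos x hx]

lemma killingForm_eq_zero_of_map_eq_of_map_eq_neg (hσ : IsCartanInvolution σ) {z h : 𝔤}
    (hz : σ z = z) (hh : σ h = -h) : killingForm ℝ 𝔤 z h = 0 := by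
  have := hσ.killingForm_map_map z h
  rw [hz, hh, map_neg] at this
  linarith

@[reducible] noncomputable def innerCore (hσ : IsCartanInvolution σ) (E : Submodule ℝ 𝔤) :
    InnerProductSpace.Core ℝ E where
  inner u v := -killingForm ℝ 𝔤 u (σ v)
  conj_inner_symm u v := by
    simp only [starRingEnd_apply, star_trivial, neg_inj]
    rw [← hσ.killingForm_map_left, LieModule.traceForm_comm]
  re_inner_nonneg u := by
    simpa using hσ.killingForm_self_map_nonpos u
  add_left u v w := by
    simp only [Submodule.coe_add, map_add, LinearMap.add_apply]
    ring
  smul_left u v t := by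
    simp only [SetLike.val_smul, map_smul, LinearMap.smul_apply, smul_eq_mul,
      starRingEnd_apply, star_trivial]
    ring
  definite u hu := Subtype.ext (hσ.eq_zero_of_killingForm_self_map (neg_eq_zero.1 hu))

end IsCartanInvolution

section RestrictedRoots

variable {𝔤 : Type} [LieRing 𝔤] [LieAlgebra ℝ 𝔤] {σ : 𝔤 →ₗ⁅ℝ⁆ 𝔤} {𝔞 : LieSubalgebra ℝ 𝔤}
  {lam : Module.Dual ℝ 𝔞} {Hlam : 𝔞}

lemma killingForm_lie_of_mem_rootSpace' {mu : Module.Dual ℝ 𝔞} {Y : 𝔤}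
    (hY : Y ∈ rootSpace' 𝔞 mu) (X : 𝔤) (H : 𝔞) :
    killingForm ℝ 𝔤 ⁅X, Y⁆ H = -mu H * killingForm ℝ 𝔤 X Y := by
  rw [LieModule.traceForm_apply_lie_apply, ← lie_skew, hY H, map_neg, map_smul,
    smul_eq_mul, neg_mul]

lemma eq_zero_of_killingForm_eq_zero (hσ : IsCartanInvolution σ) (h𝔞p : ∀ X ∈ 𝔞, σ X = -X)
    {D : 𝔤} (hD : D ∈ 𝔞) (h : ∀ H : 𝔞, killingForm ℝ 𝔤 D H = 0) : D = 0 :=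
  hσ.eq_zero_of_killingForm_self_map <| by
    rw [h𝔞p D hD, map_neg, neg_eq_zero]
    exact h ⟨D, hD⟩

lemma apply_pos_of_killingForm_eq (hσ : IsCartanInvolution σ) (h𝔞p : ∀ X ∈ 𝔞, σ X = -X)
    (hHlam : ∀ H : 𝔞, killingForm ℝ 𝔤 Hlam H = lam H) (hlam : lam ≠ 0) : 0 < lam Hlam := by
  have hH0 : (Hlam : 𝔤) ≠ 0 := fun h0 => hlam <| LinearMap.ext fun H => by
    rw [← hHlam, h0, map_zero, LinearMap.zero_apply, LinearMap.zero_apply]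
  have := hσ.neg_killingForm_pos _ hH0
  rwa [h𝔞p _ Hlam.2, map_neg, neg_neg, hHlam] at this

lemma lie_map_sub_map_lie (hσ : IsCartanInvolution σ) (h𝔞p : ∀ X ∈ 𝔞, σ X = -X)
    (h𝔞cent : ∀ W ∈ rootSpace' 𝔞 0, σ W = -W → W ∈ 𝔞)
    (hHlam : ∀ H : 𝔞, killingForm ℝ 𝔤 Hlam H = lam H) {X Y : 𝔤}
    (hX : X ∈ rootSpace' 𝔞 lam) (hY : Y ∈ rootSpace' 𝔞 lam) :
    ⁅X, σ Y⁆ - ⁅σ X, Y⁆ = (2 * killingForm ℝ 𝔤 X (σ Y)) • (Hlam : 𝔤) := by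
  have hσX := map_mem_rootSpace'_neg h𝔞p hX
  have hσY := map_mem_rootSpace'_neg h𝔞p hY
  have hP0 : ⁅X, σ Y⁆ - ⁅σ X, Y⁆ ∈ rootSpace' 𝔞 0 := by
    refine sub_mem ?_ ?_
    · simpa using lie_mem_rootSpace' hX hσY
    · simpa using lie_mem_rootSpace' hσX hY
  have hPp : σ (⁅X, σ Y⁆ - ⁅σ X, Y⁆) = -(⁅X, σ Y⁆ - ⁅σ X, Y⁆) := by
    rw [map_sub, LieHom.map_lie, LieHom.map_lie, hσ.involutive, hσ.involutive, neg_sub]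
  rw [← sub_eq_zero]
  refine eq_zero_of_killingForm_eq_zero hσ h𝔞p
    (sub_mem (h𝔞cent _ hP0 hPp) (𝔞.smul_mem _ Hlam.2)) fun H => ?_
  rw [map_sub, map_sub, map_smul, LinearMap.sub_apply, LinearMap.sub_apply, LinearMap.smul_apply,
    killingForm_lie_of_mem_rootSpace' hσY, killingForm_lie_of_mem_rootSpace' hY, hHlam,
    hσ.killingForm_map_left, smul_eq_mul, LinearMap.neg_apply]
  ring

lemma lie_map_self (hσ : IsCartanInvolution σ) (h𝔞p : ∀ X ∈ 𝔞, σ X = -X)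
    (h𝔞cent : ∀ W ∈ rootSpace' 𝔞 0, σ W = -W → W ∈ 𝔞)
    (hHlam : ∀ H : 𝔞, killingForm ℝ 𝔤 Hlam H = lam H) {X : 𝔤} (hX : X ∈ rootSpace' 𝔞 lam) :
    ⁅X, σ X⁆ = killingForm ℝ 𝔤 X (σ X) • (Hlam : 𝔤) := by
  have h := lie_map_sub_map_lie hσ h𝔞p h𝔞cent hHlam hX hX
  rw [← lie_skew (σ X) X, sub_neg_eq_add, ← two_smul ℝ, mul_smul] at h
  exact smul_right_injective 𝔤 two_ne_zero h

lemma eq_zero_of_orthogonal_mSub_lie (hσ : IsCartanInvolution σ) (h𝔞p : ∀ X ∈ 𝔞, σ X = -X)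
    (h𝔞cent : ∀ W ∈ rootSpace' 𝔞 0, σ W = -W → W ∈ 𝔞)
    (hHlam : ∀ H : 𝔞, killingForm ℝ 𝔤 Hlam H = lam H) (hlam : lam ≠ 0) {Y V : 𝔤}
    (hY : Y ∈ rootSpace' 𝔞 lam) (hY0 : Y ≠ 0) (hV : V ∈ rootSpace' 𝔞 lam)
    (horth : killingForm ℝ 𝔤 Y (σ V) = 0)
    (hbr : ∀ Z ∈ mSub σ 𝔞, killingForm ℝ 𝔤 ⁅Z, Y⁆ (σ V) = 0) : V = 0 := by
  have hσV := map_mem_rootSpace'_neg h𝔞p hV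
  have hQ : ⁅Y, σ V⁆ = ⁅σ Y, V⁆ := by
    simpa [horth, sub_eq_zero] using lie_map_sub_map_lie hσ h𝔞p h𝔞cent hHlam hY hV
  have hQm : ⁅Y, σ V⁆ ∈ mSub σ 𝔞 :=
    ⟨by rw [LieHom.map_lie, hσ.involutive, hQ],
      mem_rootSpace'_zero.1 (by simpa using lie_mem_rootSpace' hY hσV)⟩
  have hQ0 : ⁅Y, σ V⁆ = 0 := hσ.eq_zero_of_killingForm_self_map <| by
    rw [hQm.1, ← LieModule.traceForm_apply_lie_apply]
    exact hbr _ hQm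
  have hT : ⁅Y, ⁅σ Y, σ V⁆⁆ = (-(killingForm ℝ 𝔤 Y (σ Y) * lam Hlam)) • σ V := by
    have hjac := lie_lie Y (σ Y) (σ V)
    rw [hQ0, lie_zero, sub_zero, lie_map_self hσ h𝔞p h𝔞cent hHlam hY, smul_lie, hσV Hlam,
      LinearMap.neg_apply, smul_smul] at hjac
    rw [← hjac, mul_neg]
  have hYV : killingForm ℝ 𝔤 ⁅Y, V⁆ (σ ⁅Y, V⁆) =
      killingForm ℝ 𝔤 Y (σ Y) * lam Hlam * killingForm ℝ 𝔤 V (σ V) := by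
    rw [LieHom.map_lie, ← lie_skew Y V, map_neg, LinearMap.neg_apply,
      LieModule.traceForm_apply_lie_apply, hT, map_smul, smul_eq_mul]
    ring
  have hc : killingForm ℝ 𝔤 Y (σ Y) * lam Hlam < 0 :=
    mul_neg_of_neg_of_pos (by linarith [hσ.neg_killingForm_pos Y hY0])
      (apply_pos_of_killingForm_eq hσ h𝔞p hHlam hlam)
  refine hσ.eq_zero_of_killingForm_self_map (le_antisymm (hσ.killingForm_self_map_nonpos V) ?_)
  nlinarith [hσ.killingForm_self_map_nonpos ⁅Y, V⁆]

end RestrictedRoots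

section InnerProduct

open scoped RealInnerProductSpace

variable {E : Type*} [NormedAddCommGroup E] [InnerProductSpace ℝ E]

lemma exists_ne_zero_inner_eq_zero [FiniteDimensional ℝ E] (h : 1 < Module.finrank ℝ E)
    (x : E) : ∃ y ≠ 0, ⟪x, y⟫ = 0 := by
  have : (ℝ ∙ x)ᗮ ≠ ⊥ := by
    rw [Ne, Submodule.orthogonal_eq_bot_iff]
    intro htop
    refine h.not_ge (finrank_le_one x fun w => ?_)
    exact Submodule.mem_span_singleton.1 (htop ▸ Submodule.mem_top)
  obtain ⟨y, hy, hy0⟩ := Submodule.exists_mem_ne_zero_of_ne_bot this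
  exact ⟨y, hy0, Submodule.inner_right_of_mem_orthogonal (Submodule.mem_span_singleton_self x) hy⟩

lemma mem_of_orthogonal_sup_span_eq_bot [FiniteDimensional ℝ E] {K : Submodule ℝ E} {x y : E}
    (hK : ∀ k ∈ K, ⟪k, y⟫ = 0) (hKy : (K ⊔ ℝ ∙ y)ᗮ = ⊥) (hx : ⟪x, y⟫ = 0) : x ∈ K := by
  rw [Submodule.orthogonal_eq_bot_iff] at hKy
  obtain ⟨k, hk, _, hty, rfl⟩ := Submodule.mem_sup.1 (hKy ▸ Submodule.mem_top : x ∈ K ⊔ ℝ ∙ y)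
  obtain ⟨t, rfl⟩ := Submodule.mem_span_singleton.1 hty
  rw [inner_add_left, hK k hk, zero_add, real_inner_smul_left, mul_eq_zero,
    inner_self_eq_zero] at hx
  rcases hx with rfl | rfl <;> simpa using hk

end InnerProduct

open scoped RealInnerProductSpace in
lemma exists_mSub_lie_eq_of_one_lt_finrank {𝔤 : Type} [LieRing 𝔤] [LieAlgebra ℝ 𝔤]
    [Module.Finite ℝ 𝔤] {σ : 𝔤 →ₗ⁅ℝ⁆ 𝔤} {𝔞 : LieSubalgebra ℝ 𝔤} {lam : Module.Dual ℝ 𝔞}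
    {Hlam : 𝔞} (hσ : IsCartanInvolution σ) (h𝔞p : ∀ X ∈ 𝔞, σ X = -X)
    (h𝔞cent : ∀ W ∈ rootSpace' 𝔞 0, σ W = -W → W ∈ 𝔞)
    (hHlam : ∀ H : 𝔞, killingForm ℝ 𝔤 Hlam H = lam H) (hlam : lam ≠ 0)
    (hdim : 1 < Module.finrank ℝ (rootSpace' 𝔞 lam)) {X : 𝔤} (hX : X ∈ rootSpace' 𝔞 lam) :
    ∃ Z ∈ mSub σ 𝔞, ∃ X' ∈ rootSpace' 𝔞 lam, X = ⁅Z, X'⁆ := by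
  set E := rootSpace' 𝔞 lam
  let core := hσ.innerCore E
  let _ : NormedAddCommGroup E := core.toNormedAddCommGroup
  let _ : InnerProductSpace ℝ E := InnerProductSpace.ofCore core.toCore
  have inner_eq (u v : E) : ⟪u, v⟫ = -killingForm ℝ 𝔤 u (σ v) := rfl
  obtain ⟨Y, hY0, hXY⟩ := exists_ne_zero_inner_eq_zero hdim ⟨X, hX⟩
  let ψ : mSub σ 𝔞 →ₗ[ℝ] E :=
    { toFun := fun Z => ⟨⁅(Z : 𝔤), (Y : 𝔤)⁆,
        by simpa using lie_mem_rootSpace' (mSub_le_rootSpace'_zero σ Z.2) Y.2⟩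
      map_add' := fun _ _ => Subtype.ext (add_lie _ _ _)
      map_smul' := fun _ _ => Subtype.ext (smul_lie _ _ _) }
  have hψY : ∀ k ∈ LinearMap.range ψ, ⟪k, Y⟫ = 0 := by
    rintro _ ⟨Z, rfl⟩
    rw [inner_eq, neg_eq_zero]
    change killingForm ℝ 𝔤 ⁅(Z : 𝔤), (Y : 𝔤)⁆ (σ Y) = 0
    rw [LieModule.traceForm_apply_lie_apply, lie_map_self hσ h𝔞p h𝔞cent hHlam Y.2, map_smul,
      hσ.killingForm_eq_zero_of_map_eq_of_map_eq_neg Z.2.1 (h𝔞p _ Hlam.2), smul_zero]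
  have hψ : (LinearMap.range ψ ⊔ ℝ ∙ Y)ᗮ = ⊥ := by
    refine (Submodule.eq_bot_iff _).2 fun V hV => Subtype.ext ?_
    rw [Submodule.mem_orthogonal] at hV
    refine eq_zero_of_orthogonal_mSub_lie hσ h𝔞p h𝔞cent hHlam hlam Y.2
      (fun h => hY0 (Subtype.ext h)) V.2 ?_ fun Z hZ => ?_
    · exact neg_eq_zero.1 (hV Y (Submodule.mem_sup_right (Submodule.mem_span_singleton_self Y)))
    · exact neg_eq_zero.1 (hV (ψ ⟨Z, hZ⟩)
        (Submodule.mem_sup_left (LinearMap.mem_range_self ψ _)))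
  obtain ⟨Z, hZ⟩ := mem_of_orthogonal_sup_span_eq_bot hψY hψ hXY
  exact ⟨Z, Z.2, Y, Y.2, congrArg Subtype.val hZ.symm⟩

theorem statement4_general
    (𝔤 : Type) [LieRing 𝔤] [LieAlgebra ℝ 𝔤] [Module.Finite ℝ 𝔤]
    -- `σ` is a Cartan involution of `𝔤`:
    (σ : 𝔤 →ₗ⁅ℝ⁆ 𝔤) (hσinv : ∀ X, σ (σ X) = X)
    (hσpos : ∀ X : 𝔤, X ≠ 0 → 0 < -(killingForm ℝ 𝔤 X (σ X)))
    -- `𝔞` is a maximal abelian subalgebra contained in `𝔭 = {X : σ X = -X}`: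
    (𝔞 : LieSubalgebra ℝ 𝔤)
    (h𝔞ab : ∀ X Y : 𝔤, X ∈ 𝔞 → Y ∈ 𝔞 → ⁅X, Y⁆ = 0)
    (h𝔞p : ∀ X ∈ 𝔞, σ X = -X)
    (h𝔞max : ∀ 𝔟 : LieSubalgebra ℝ 𝔤, (∀ X Y : 𝔤, X ∈ 𝔟 → Y ∈ 𝔟 → ⁅X, Y⁆ = 0) →
      (∀ X ∈ 𝔟, σ X = -X) → 𝔞 ≤ 𝔟 → 𝔟 = 𝔞)
    -- `φ` is a basis of `𝔞*` and `Hv lam = H_λ` is determined by the Killing form: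
    (r : ℕ) (φ : Module.Basis (Fin r) ℝ (Module.Dual ℝ 𝔞))
    (Hv : Module.Dual ℝ 𝔞 → 𝔞)
    (hHv : ∀ (lam : Module.Dual ℝ 𝔞) (H : 𝔞),
      killingForm ℝ 𝔤 (Hv lam : 𝔤) (H : 𝔤) = lam H)
    -- `λ ∈ Σ⁺` with `dim 𝔤_λ > 1`:
    (lam : Module.Dual ℝ 𝔞) (hlam : lam ∈ posRootSet 𝔞 φ Hv)
    (hdim : 1 < Module.finrank ℝ (rootSpace' 𝔞 lam)) :
    -- every linear `α : 𝔫 → ℂ` vanishing on `[𝔪, 𝔫]` vanishes on `𝔤_λ` …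
    (∀ α : (nSub 𝔞 φ Hv) →ₗ[ℝ] ℂ,
      (∀ (Z W : 𝔤) (_ : Z ∈ mSub σ 𝔞) (_ : W ∈ nSub 𝔞 φ Hv)
        (h : ⁅Z, W⁆ ∈ nSub 𝔞 φ Hv), α ⟨⁅Z, W⁆, h⟩ = 0) →
      ∀ (X : 𝔤) (_ : X ∈ rootSpace' 𝔞 lam) (hX' : X ∈ nSub 𝔞 φ Hv), α ⟨X, hX'⟩ = 0) ∧
    -- … equivalently, every element of `𝔤_λ` is a bracket `[Z, X]`, `Z ∈ 𝔪`, `X ∈ 𝔤_λ`: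
    (∀ X ∈ rootSpace' 𝔞 lam, ∃ Z ∈ mSub σ 𝔞, ∃ X' ∈ rootSpace' 𝔞 lam, X = ⁅Z, X'⁆) := by
  have hsurj : ∀ X ∈ rootSpace' 𝔞 lam, ∃ Z ∈ mSub σ 𝔞, ∃ X' ∈ rootSpace' 𝔞 lam, X = ⁅Z, X'⁆ :=
    fun X hX => exists_mSub_lie_eq_of_one_lt_finrank ⟨hσinv, hσpos⟩ h𝔞p
      (fun W hW hWp => mem_of_mem_rootSpace'_zero h𝔞ab h𝔞p h𝔞max hW hWp) (hHv lam) hlam.1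
      hdim hX
  refine ⟨fun α hα X hX hXn => ?_, hsurj⟩
  obtain ⟨Z, hZ, X', hX', rfl⟩ := hsurj X hX
  have h𝔤lam_le_𝔫 : rootSpace' 𝔞 lam ≤ nSub 𝔞 φ Hv :=
    le_iSup₂ (f := fun mu (_ : mu ∈ posRootSet 𝔞 φ Hv) => rootSpace' 𝔞 mu) lam hlam
  exact hα Z X' hZ (h𝔤lam_le_𝔫 hX') hXn

/-- If `λ ∈ Σ⁺` has `dim 𝔤_λ > 1`, then every `ℝ`-linear map `α : 𝔫 → ℂ`
vanishing on all brackets `[Z, W]` (`Z ∈ 𝔪`, `W ∈ 𝔫`) vanishes on `𝔤_λ`; equivalently,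
every element of `𝔤_λ` is of the form `[Z, X]` with `Z ∈ 𝔪` and `X ∈ 𝔤_λ`. -/
theorem statement4
    (𝔤 : Type) [LieRing 𝔤] [LieAlgebra ℝ 𝔤] [Module.Finite ℝ 𝔤]
    [LieAlgebra.IsSemisimple ℝ 𝔤]
    -- `σ` is a Cartan involution of `𝔤`:
    (σ : 𝔤 →ₗ⁅ℝ⁆ 𝔤) (hσinv : ∀ X, σ (σ X) = X)
    (hσpos : ∀ X : 𝔤, X ≠ 0 → 0 < -(killingForm ℝ 𝔤 X (σ X)))
    -- `𝔞` is a maximal abelian subalgebra contained in `𝔭 = {X : σ X = -X}`: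
    (𝔞 : LieSubalgebra ℝ 𝔤)
    (h𝔞ab : ∀ X Y : 𝔤, X ∈ 𝔞 → Y ∈ 𝔞 → ⁅X, Y⁆ = 0)
    (h𝔞p : ∀ X ∈ 𝔞, σ X = -X)
    (h𝔞max : ∀ 𝔟 : LieSubalgebra ℝ 𝔤, (∀ X Y : 𝔤, X ∈ 𝔟 → Y ∈ 𝔟 → ⁅X, Y⁆ = 0) →
      (∀ X ∈ 𝔟, σ X = -X) → 𝔞 ≤ 𝔟 → 𝔟 = 𝔞)
    -- `φ` is a basis of `𝔞*` and `Hv lam = H_λ` is determined by the Killing form: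
    (r : ℕ) (φ : Module.Basis (Fin r) ℝ (Module.Dual ℝ 𝔞))
    (Hv : Module.Dual ℝ 𝔞 → 𝔞)
    (hHv : ∀ (lam : Module.Dual ℝ 𝔞) (H : 𝔞),
      killingForm ℝ 𝔤 (Hv lam : 𝔤) (H : 𝔤) = lam H)
    -- `λ ∈ Σ⁺` with `dim 𝔤_λ > 1`:
    (lam : Module.Dual ℝ 𝔞) (hlam : lam ∈ posRootSet 𝔞 φ Hv)
    (hdim : 1 < Module.finrank ℝ (rootSpace' 𝔞 lam)) :
    -- every linear `α : 𝔫 → ℂ` vanishing on `[𝔪, 𝔫]` vanishes on `𝔤_λ` …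
    (∀ α : (nSub 𝔞 φ Hv) →ₗ[ℝ] ℂ,
      (∀ (Z W : 𝔤) (_ : Z ∈ mSub σ 𝔞) (_ : W ∈ nSub 𝔞 φ Hv)
        (h : ⁅Z, W⁆ ∈ nSub 𝔞 φ Hv), α ⟨⁅Z, W⁆, h⟩ = 0) →
      ∀ (X : 𝔤) (_ : X ∈ rootSpace' 𝔞 lam) (hX' : X ∈ nSub 𝔞 φ Hv), α ⟨X, hX'⟩ = 0) ∧
    -- … equivalently, every element of `𝔤_λ` is a bracket `[Z, X]`, `Z ∈ 𝔪`, `X ∈ 𝔤_λ`: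
    (∀ X ∈ rootSpace' 𝔞 lam, ∃ Z ∈ mSub σ 𝔞, ∃ X' ∈ rootSpace' 𝔞 lam, X = ⁅Z, X'⁆) :=
  statement4_general 𝔤 σ hσinv hσpos 𝔞 h𝔞ab h𝔞p h𝔞max r φ Hv hHv lam hlam hdim
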